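/- arXiv:2303.02572 — 5 statements merged into one kernel-verified Lean document; each statement's English description precedes it below -/
import Mathlib

section
/- Let A and B be categories with pullbacks, and let L : A ⥤ B be a functor preserving pullbacks, with a right adjoint R : B ⥤ A and adjunction unit η. Let f : X ⟶ Y be a morphism in A, let g : Q ⟶ L X be a morphism in B, and suppose a pushforward p : P ⟶ L Y of g along L f exists in B. Then the pullback of R p : R P ⟶ R L Y along η_Y : Y ⟶ R L Y is a pushforward along f of the pullback of R g : R Q ⟶ R L X along η_X : X ⟶ R L X; that is, there are bijections Hom_{Over Y}(h, η_Y^*(R p)) ≅ Hom_{Over X}(f^* h, η_X^*(R g)), natural in h ∈ Over Y. -/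
open CategoryTheory CategoryTheory.Limits

universe v₁ v₂ u₁ u₂

/-- `p : P ⟶ Y` (as an object of `Over Y`) is a pushforward of `q : Q ⟶ X` (as an object of
`Over X`) along `f : X ⟶ Y` if `p` represents the functor `h ↦ Hom_{Over X}(f^* h, q)`;
i.e. there are bijections `Hom_{Over Y}(h, p) ≅ Hom_{Over X}(f^* h, q)` natural in
`h ∈ Over Y`. -/
def IsPushforward {C : Type u₁} [Category.{v₁} C] [HasPullbacks C] {X Y : C} (f : X ⟶ Y)
    (q : Over X) (p : Over Y) : Prop :=
  Nonempty (yoneda.obj p ≅ (Over.pullback f).op ⋙ yoneda.obj q)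

noncomputable section

variable {A : Type u₁} [Category.{v₁} A] {B : Type u₂} [Category.{v₂} B]
  [HasPullbacks A] [HasPullbacks B]
  (L : A ⥤ B) (R : B ⥤ A) (adj : L ⊣ R)

/-- The hom-set bijection underlying `postPullbackAdj`. -/
def postHomEquiv {Z : A} (h : Over Z) (u : Over (L.obj Z)) :
    ((Over.post L).obj h ⟶ u) ≃
      ((Over.map (adj.unit.app Z)).obj h ⟶ (Over.post R).obj u) where
  toFun k := Over.homMk ((adj.homEquiv _ _) k.left)
    (by
      have key : ∀ (a : L.obj h.left ⟶ u.left), a ≫ u.hom = L.map h.hom →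
          adj.homEquiv _ _ a ≫ R.map u.hom = h.hom ≫ adj.unit.app Z := by
        intro a this
        rw [← adj.homEquiv_naturality_right, this, Adjunction.homEquiv_unit]
        simpa using (adj.unit.naturality h.hom).symm
      exact key k.left (Over.w k))
  invFun m := Over.homMk ((adj.homEquiv _ _).symm m.left)
    (by
      have key : ∀ (a : h.left ⟶ R.obj u.left), a ≫ R.map u.hom = h.hom ≫ adj.unit.app Z →
          (adj.homEquiv _ _).symm a ≫ u.hom = L.map h.hom := by
        intro a this
        rw [← adj.homEquiv_naturality_right_symm, this, Adjunction.homEquiv_counit]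
        simp
      exact key m.left (Over.w m))
  left_inv k := by ext; exact (adj.homEquiv _ _).symm_apply_apply k.left
  right_inv m := by ext; exact (adj.homEquiv _ _).apply_symm_apply m.left

/-- The adjunction `Over.post L ⊣ Over.post R ⋙ Over.pullback η_Z`. -/
def postPullbackAdj (Z : A) :
    Over.post (X := Z) L ⊣ Over.post R ⋙ Over.pullback (adj.unit.app Z) :=
  Adjunction.mkOfHomEquiv
  { homEquiv := fun h u =>
      (postHomEquiv L R adj h u).trans
        ((Over.mapPullbackAdj (adj.unit.app Z)).homEquiv h ((Over.post R).obj u))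
    homEquiv_naturality_left_symm := fun {h' h u} t s => by
      ext
      simp [postHomEquiv, Over.mapPullbackAdj, ← Adjunction.homEquiv_naturality_left_symm]
      exact adj.homEquiv_naturality_left_symm _ _
    homEquiv_naturality_right := fun {h u u'} s w => by
      ext
      apply pullback.hom_ext <;>
        simp [postHomEquiv, Over.mapPullbackAdj, Adjunction.homEquiv_naturality_right]
      · delta Over.post
        simp only [Over.homMk_left, Over.pullback_map_left, pullback.lift_fst, pullback.lift_fst_assoc]
        exact adj.homEquiv_naturality_right _ _
      · delta Over.post
        simp only [Over.homMk_left, Over.pullback_map_left, pullback.lift_snd] }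

end

noncomputable section
variable {A : Type u₁} [Category.{v₁} A] {B : Type u₂} [Category.{v₂} B]
  [HasPullbacks A] [HasPullbacks B]
  (L : A ⥤ B) [PreservesLimitsOfShape WalkingCospan L]

/-- Beck–Chevalley isomorphism for `Over.post`. -/
def postPullbackIso {X Y : A} (f : X ⟶ Y) :
    Over.pullback f ⋙ Over.post L ≅ Over.post L ⋙ Over.pullback (L.map f) :=
  NatIso.ofComponents
    (fun h => Over.isoMk (PreservesPullback.iso L h.hom f) (by simp; exact pullbackComparison_comp_snd L h.hom f))
    (fun {h1 h2} t => by
      ext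
      dsimp
      delta Over.post
      apply pullback.hom_ext
      · simp only [Over.homMk_left, Over.isoMk_hom_left, Over.pullback_map_left, Over.mk_hom, Category.assoc, PreservesPullback.iso_hom_fst, PreservesPullback.iso_hom_fst_assoc,
          pullbackComparison_comp_fst, pullbackComparison_comp_fst_assoc,
          ← L.map_comp, pullback.lift_fst]
      · simp only [Over.homMk_left, Over.isoMk_hom_left, Over.pullback_map_left, Over.mk_hom, Category.assoc, PreservesPullback.iso_hom_snd,
          pullbackComparison_comp_snd, pullbackComparison_comp_snd_assoc,
          ← L.map_comp, pullback.lift_snd])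
end

/-- Let `L : A ⥤ B` preserve pullbacks and have a right adjoint `R` with unit `η`.  If
`p : P ⟶ L Y` is a pushforward of `g : Q ⟶ L X` along `L f`, then the pullback of `R p`
along `η_Y` is a pushforward along `f : X ⟶ Y` of the pullback of `R g` along `η_X`. -/
theorem pushforward_adjunction_transfer
    {A : Type u₁} [Category.{v₁} A] {B : Type u₂} [Category.{v₂} B]
    [HasPullbacks A] [HasPullbacks B]
    (L : A ⥤ B) (R : B ⥤ A) (adj : L ⊣ R) [PreservesLimitsOfShape WalkingCospan L]
    {X Y : A} (f : X ⟶ Y) {Q : B} (g : Q ⟶ L.obj X)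
    (p : Over (L.obj Y)) (hp : IsPushforward (L.map f) (Over.mk g) p) :
    IsPushforward f ((Over.pullback (adj.unit.app X)).obj (Over.mk (R.map g)))
      ((Over.pullback (adj.unit.app Y)).obj (Over.mk (R.map p.hom))) := by
  obtain ⟨e⟩ := hp
  refine ⟨NatIso.ofComponents (fun h => Equiv.toIso
    (((((postPullbackAdj L R adj Y).homEquiv h.unop p).symm.trans
      (e.app (Opposite.op ((Over.post L).obj h.unop))).toEquiv).trans
      (Iso.homCongr (((postPullbackIso L f).app h.unop).symm) (Iso.refl (Over.mk g)))).trans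
      ((postPullbackAdj L R adj X).homEquiv ((Over.pullback f).obj h.unop) (Over.mk g))))
    (fun {h1 h2} t => ?_)⟩
  ext s
  have step2 := ConcreteCategory.congr_hom (e.hom.naturality ((Over.post L).map t.unop).op)
    (((postPullbackAdj L R adj Y).homEquiv h1.unop p).symm s)
  have step3 := (postPullbackIso L f).hom.naturality t.unop
  have step1 := (postPullbackAdj L R adj Y).homEquiv_naturality_left_symm t.unop s
  have step4 := (postPullbackAdj L R adj X).homEquiv_naturality_left
    ((Over.pullback f).map t.unop)
    ((postPullbackIso L f).hom.app h1.unop ≫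
      e.hom.app (Opposite.op ((Over.post L).obj h1.unop))
        (((postPullbackAdj L R adj Y).homEquiv h1.unop p).symm s))
  dsimp at step1 step2 step3 step4 ⊢
  show ((postPullbackAdj L R adj X).homEquiv ((Over.pullback f).obj h2.unop) (Over.mk g))
      ((postPullbackIso L f).hom.app h2.unop ≫ e.hom.app (Opposite.op ((Over.post L).obj h2.unop))
        (((postPullbackAdj L R adj Y).homEquiv h2.unop p).symm (t.unop ≫ s)) ≫ 𝟙 (Over.mk g)) =
    (Over.pullback f).map t.unop ≫
      ((postPullbackAdj L R adj X).homEquiv ((Over.pullback f).obj h1.unop) (Over.mk g))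
      ((postPullbackIso L f).hom.app h1.unop ≫ e.hom.app (Opposite.op ((Over.post L).obj h1.unop))
        (((postPullbackAdj L R adj Y).homEquiv h1.unop p).symm s) ≫ 𝟙 (Over.mk g))
  simp only [Category.comp_id]
  rw [step1, step2, ← step4]
  congr 1
  simp only [← Category.assoc]
  congr 1
  exact step3.symm
end

section
/- Let E be a category with pullbacks, let i : C ⥤ E be a fully faithful functor with a left adjoint r : E ⥤ C that preserves finite limits (a left-exact reflection). Let f : A ⟶ B be a morphism of E that is a pullback of a morphism in the image of i, let g : B ⟶ X be any morphism of E, and suppose a pushforward p : P ⟶ X of f along g exists. Then p is again a pullback of a morphism in the image of i. (Thus the essential image of i generates a local exponential ideal: pullbacks of i-images are closed under pushforward.) -/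
open CategoryTheory CategoryTheory.Limits

universe v₁ v₂ u₁ u₂

/-- A morphism `f : A ⟶ B` of `E` is a pullback of a morphism in the image of `i : C ⥤ E`
if there is a pullback square in which one pair of parallel sides consists of `f` and
`i.map f₀` for some morphism `f₀` of `C`. -/
def IsPullbackOfImage {C : Type u₁} [Category.{v₁} C] {E : Type u₂} [Category.{v₂} E]
    (i : C ⥤ E) {A B : E} (f : A ⟶ B) : Prop :=
  ∃ (c c' : C) (f₀ : c ⟶ c') (u : A ⟶ i.obj c) (v : B ⟶ i.obj c'),
    IsPullback u f (i.map f₀) v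

section Aux

variable {C : Type u₁} [Category.{v₁} C] {E : Type u₂} [Category.{v₂} E]

/-- Precomposition with a morphism inverted by `r` is bijective on maps into `i`-objects. -/
lemma hom_to_image_bij (i : C ⥤ E) (r : E ⥤ C) (adj : r ⊣ i) {S S' : E} (w : S ⟶ S')
    (hw : IsIso (r.map w)) (c : C) :
    Function.Bijective (fun x : S' ⟶ i.obj c => w ≫ x) := by
  haveI := hw
  have e1 : Function.Bijective (fun y : r.obj S' ⟶ c => r.map w ≫ y) := by
    constructor
    · intro a b hab
      simpa using congrArg (fun z => inv (r.map w) ≫ z) hab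
    · intro y
      exact ⟨inv (r.map w) ≫ y, by simp⟩
  have heq : (fun x : S' ⟶ i.obj c => w ≫ x) =
      (adj.homEquiv S c) ∘ (fun y : r.obj S' ⟶ c => r.map w ≫ y) ∘ (adj.homEquiv S' c).symm := by
    funext x
    simp only [Function.comp_apply]
    rw [adj.homEquiv_naturality_left]
    simp
  rw [heq]
  exact ((adj.homEquiv S c).bijective.comp e1).comp (adj.homEquiv S' c).symm.bijective

/-- A pullback of an `i`-image is local: precomposition with `r`-inverted morphisms is
bijective on hom-sets into it. -/
lemma precomp_bij_of_isPullbackOfImage (i : C ⥤ E) (r : E ⥤ C) (adj : r ⊣ i) {Y : E}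
    {q : Over Y} (hq : IsPullbackOfImage i q.hom)
    {h h' : Over Y} (m : h ⟶ h') (hm : IsIso (r.map m.left)) :
    Function.Bijective (fun t : h' ⟶ q => m ≫ t) := by
  obtain ⟨c, c', f₀, u, v, hpb⟩ := hq
  have binj := fun c'' => (hom_to_image_bij i r adj m.left hm c'').injective
  constructor
  · intro t₁ t₂ ht
    have hl : m.left ≫ t₁.left = m.left ≫ t₂.left := by
      have := congrArg CommaMorphism.left ht
      simpa using this
    apply Over.OverMorphism.ext
    apply hpb.hom_ext
    · apply binj c
      simp only [Category.assoc] at hl ⊢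
      rw [reassoc_of% hl]
    · rw [Over.w t₁, Over.w t₂]
  · intro t
    obtain ⟨s, hs⟩ := (hom_to_image_bij i r adj m.left hm c).surjective (t.left ≫ u)
    have hs' : m.left ≫ s = t.left ≫ u := hs
    have hcond : s ≫ i.map f₀ = h'.hom ≫ v := by
      apply binj c'
      show m.left ≫ s ≫ i.map f₀ = m.left ≫ h'.hom ≫ v
      rw [← Category.assoc, hs', Category.assoc, hpb.w, ← Category.assoc, Over.w t,
        reassoc_of% (Over.w m)]
    refine ⟨Over.homMk (hpb.lift s h'.hom hcond) (hpb.lift_snd _ _ _), ?_⟩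
    apply Over.OverMorphism.ext
    apply hpb.hom_ext
    · simp only [Over.comp_left, Over.homMk_left, Category.assoc, hpb.lift_fst]
      exact hs' 
    · simp only [Over.comp_left, Over.homMk_left, Category.assoc, hpb.lift_snd]
      rw [Over.w m, Over.w t]

/-- `r` inverts the unit of a reflective adjunction. -/
lemma isIso_r_map_unit (i : C ⥤ E) [i.Full] [i.Faithful] (r : E ⥤ C) (adj : r ⊣ i) (T : E) :
    IsIso (r.map (adj.unit.app T)) := by
  refine ⟨adj.counit.app (r.obj T), adj.left_triangle_components T, ?_⟩
  have h1 := adj.left_triangle_components T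
  haveI : IsIso (adj.counit.app (r.obj T)) := inferInstance
  rw [← cancel_mono (adj.counit.app (r.obj T)), Category.assoc, h1]
  simp

/-- A local object of `Over Y` is a pullback of an `i`-image. -/
lemma isPullbackOfImage_of_local [HasPullbacks E] (i : C ⥤ E) [i.Full] [i.Faithful]
    (r : E ⥤ C) (adj : r ⊣ i) [PreservesFiniteLimits r] {Y : E} (q : Over Y)
    (loc : ∀ {h h' : Over Y} (m : h ⟶ h'), IsIso (r.map m.left) →
      Function.Bijective (fun t : h' ⟶ q => m ≫ t)) :
    IsPullbackOfImage i q.hom := by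
  have comm : adj.unit.app q.left ≫ i.map (r.map q.hom) = q.hom ≫ adj.unit.app Y := by
    simp
  set Z := pullback (i.map (r.map q.hom)) (adj.unit.app Y) with hZ
  set k : q.left ⟶ Z := pullback.lift (adj.unit.app q.left) q.hom comm with hk
  -- `r` inverts `pullback.fst`
  have hpbZ : IsPullback (pullback.fst (i.map (r.map q.hom)) (adj.unit.app Y))
      (pullback.snd (i.map (r.map q.hom)) (adj.unit.app Y))
      (i.map (r.map q.hom)) (adj.unit.app Y) := IsPullback.of_hasPullback _ _
  have hr := hpbZ.map r
  haveI hY : IsIso (r.map (adj.unit.app Y)) := isIso_r_map_unit i r adj Y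
  have hfst : IsIso (r.map (pullback.fst (i.map (r.map q.hom)) (adj.unit.app Y))) := by
    refine ⟨hr.lift (𝟙 _) (r.map (i.map (r.map q.hom)) ≫ inv (r.map (adj.unit.app Y)))
      (by simp), ?_, hr.lift_fst _ _ _⟩
    apply hr.hom_ext
    · simp [hr.lift_fst]
    · simp only [Category.assoc, hr.lift_snd, Category.id_comp]
      rw [reassoc_of% hr.w]
      simp
  -- `r` inverts `k`
  have hrk : IsIso (r.map k) := by
    have h1 : r.map k ≫ r.map (pullback.fst (i.map (r.map q.hom)) (adj.unit.app Y)) =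
        r.map (adj.unit.app q.left) := by
      rw [← r.map_comp, hk, pullback.lift_fst]
    haveI := isIso_r_map_unit i r adj q.left
    haveI := hfst
    have : r.map k = r.map (adj.unit.app q.left) ≫
        inv (r.map (pullback.fst (i.map (r.map q.hom)) (adj.unit.app Y))) := by
      rw [← h1]; simp
    rw [this]; infer_instance
  -- use locality to construct an inverse of `k`
  set zobj : Over Y := Over.mk (pullback.snd (i.map (r.map q.hom)) (adj.unit.app Y)) with hzobj
  set κ : q ⟶ zobj := Over.homMk k (pullback.lift_snd _ _ _) with hκ
  have hκl : IsIso (r.map κ.left) := by simpa [hκ] using hrk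
  obtain ⟨σ, hσ⟩ := (loc κ hκl).surjective (𝟙 q)
  have hσl : k ≫ σ.left = 𝟙 q.left := by
    have := congrArg CommaMorphism.left hσ
    simpa [hκ] using this
  have hiso : IsIso k := by
    refine ⟨σ.left, hσl, ?_⟩
    apply pullback.hom_ext
    · apply (hom_to_image_bij i r adj k hrk (r.obj q.left)).injective
      show k ≫ (σ.left ≫ k) ≫ pullback.fst (i.map (r.map q.hom)) (adj.unit.app Y)
        = k ≫ 𝟙 Z ≫ pullback.fst (i.map (r.map q.hom)) (adj.unit.app Y)
      rw [← Category.assoc, ← Category.assoc, hσl]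
      simp
    · simp only [Category.assoc, Category.id_comp]
      rw [hk, pullback.lift_snd, Over.w σ]
      rfl
  refine ⟨r.obj q.left, r.obj Y, r.map q.hom, adj.unit.app q.left, adj.unit.app Y,
    IsPullback.of_iso_pullback ⟨comm⟩ (@asIso _ _ _ _ k hiso) ?_ ?_⟩
  · simp [hk]; exact pullback.lift_fst _ _ _
  · simp [hk]; exact pullback.lift_snd _ _ _

end Aux

/-- For a left-exact reflective subcategory `i : C ⥤ E` (fully faithful, with a
finite-limit-preserving left adjoint `r`), pullbacks of morphisms in the image of `i`
are closed under pushforward: if `f : A ⟶ B` is a pullback of an `i`-image and `p` is a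
pushforward of `f` along any `g : B ⟶ X`, then `p` is again a pullback of an `i`-image. -/
theorem isPullbackOfImage_pushforward
    {C : Type u₁} [Category.{v₁} C] {E : Type u₂} [Category.{v₂} E] [HasPullbacks E]
    (i : C ⥤ E) [i.Full] [i.Faithful] (r : E ⥤ C) (adj : r ⊣ i) [PreservesFiniteLimits r]
    {A B X : E} (f : A ⟶ B) (hf : IsPullbackOfImage i f) (g : B ⟶ X)
    (p : Over X) (hp : IsPushforward g (Over.mk f) p) :
    IsPullbackOfImage i p.hom := by
  obtain ⟨Φ⟩ := hp
  apply isPullbackOfImage_of_local i r adj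
  intro h h' m hm
  -- `r` inverts the pulled-back morphism
  have sq1 := (IsPullback.of_hasPullback h.hom g).map r
  have sq2 := (IsPullback.of_hasPullback h'.hom g).map r
  have hwm : r.map m.left ≫ r.map h'.hom = r.map h.hom := by
    rw [← r.map_comp, Over.w m]
  haveI := hm
  have hinv : inv (r.map m.left) ≫ r.map h.hom = r.map h'.hom := by
    rw [← hwm]; simp
  set lam := r.map ((Over.pullback g).map m).left with hlam
  have hlam_fst : lam ≫ r.map (pullback.fst h'.hom g) =
      r.map (pullback.fst h.hom g) ≫ r.map m.left := by
    rw [hlam, ← r.map_comp, ← r.map_comp]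
    congr 1
    simp [Over.pullback]; exact pullback.lift_fst _ _ _
  have hlam_snd : lam ≫ r.map (pullback.snd h'.hom g) = r.map (pullback.snd h.hom g) := by
    rw [hlam, ← r.map_comp]
    congr 1
    simp [Over.pullback]; exact pullback.lift_snd _ _ _
  have hmu_w : (r.map (pullback.fst h'.hom g) ≫ inv (r.map m.left)) ≫ r.map h.hom =
      r.map (pullback.snd h'.hom g) ≫ r.map g := by
    rw [Category.assoc, hinv]
    exact sq2.w
  have hG : IsIso (r.map ((Over.pullback g).map m).left) := by
    rw [← hlam]
    refine ⟨sq1.lift (r.map (pullback.fst h'.hom g) ≫ inv (r.map m.left))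
      (r.map (pullback.snd h'.hom g)) hmu_w, ?_, ?_⟩
    · apply sq1.hom_ext
      · rw [Category.assoc, sq1.lift_fst, ← Category.assoc, hlam_fst, Category.assoc,
          IsIso.hom_inv_id, Category.comp_id, Category.id_comp]
      · rw [Category.assoc, sq1.lift_snd, hlam_snd, Category.id_comp]
    · apply sq2.hom_ext
      · rw [Category.assoc, hlam_fst, ← Category.assoc, sq1.lift_fst, Category.assoc,
          IsIso.inv_hom_id, Category.comp_id, Category.id_comp]
      · rw [Category.assoc, hlam_snd, sq1.lift_snd, Category.id_comp]
  have hbij := precomp_bij_of_isPullbackOfImage i r adj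
    (q := Over.mk f) hf ((Over.pullback g).map m) hG
  have hnat : ∀ t : h' ⟶ p, Φ.hom.app (Opposite.op h) (m ≫ t)
      = (Over.pullback g).map m ≫ Φ.hom.app (Opposite.op h') t := by
    intro t
    exact NatTrans.naturality_apply Φ.hom m.op t
  have heq : (fun t : h' ⟶ p => m ≫ t) =
      (fun s => Φ.inv.app (Opposite.op h) s) ∘
        (fun s => (Over.pullback g).map m ≫ s) ∘ (fun t => Φ.hom.app (Opposite.op h') t) := by
    funext t
    simp only [Function.comp_apply]
    rw [← hnat t]
    exact (Iso.hom_inv_id_app_apply Φ (Opposite.op h) (show h ⟶ p from m ≫ t)).symm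
  rw [heq]
  exact (((Φ.app (Opposite.op h)).symm.toEquiv.bijective).comp hbij).comp
    (Φ.app (Opposite.op h')).toEquiv.bijective
end

section
/- Let E be a category with pullbacks, let i : C ⥤ E be a fully faithful functor with a left adjoint r : E ⥤ C (unit η) that preserves finite limits. Fix an object X of E. For any h : Y ⟶ X in E, let h̃ : X ×_{i r X} i r Y ⟶ X denote the pullback of i.map (r.map h) along η_X : X ⟶ i r X, and let u : Y ⟶ X ×_{i r X} i r Y be the canonical morphism over X induced by h and η_Y. Then for every f : A ⟶ X that is a pullback of a morphism in the image of i, and every k : Y ⟶ A with f ∘ k = h, there is a unique morphism k' : X ×_{i r X} i r Y ⟶ A with f ∘ k' = h̃ and k' ∘ u = k. (In other words, the full subcategory of Over X on pullbacks of i-images is reflective, with reflection h ↦ h̃.) -/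
open CategoryTheory CategoryTheory.Limits

universe v₁ v₂ u₁ u₂

/-- For a left-exact reflective subcategory `i : C ⥤ E` with reflector `r` and unit `η`,
and an object `X` of `E`: for any `h : Y ⟶ X`, let `h̃ : X ×_{i r X} i r Y ⟶ X` be the
pullback of `i.map (r.map h)` along `η_X`, and `u : Y ⟶ X ×_{i r X} i r Y` the canonical
map induced by `h` and `η_Y`.  Then for every `f : A ⟶ X` that is a pullback of an
`i`-image and every `k : Y ⟶ A` with `f ∘ k = h`, there is a unique
`k' : X ×_{i r X} i r Y ⟶ A` with `f ∘ k' = h̃` and `k' ∘ u = k`. -/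
theorem slice_reflection_of_image_pullbacks
    {C : Type u₁} [Category.{v₁} C] {E : Type u₂} [Category.{v₂} E] [HasPullbacks E]
    (i : C ⥤ E) [i.Full] [i.Faithful] (r : E ⥤ C) (adj : r ⊣ i) [PreservesFiniteLimits r]
    (X Y : E) (h : Y ⟶ X)
    {A : E} (f : A ⟶ X) (hf : IsPullbackOfImage i f) (k : Y ⟶ A) (hk : k ≫ f = h) :
    ∃! k' : pullback (adj.unit.app X) (i.map (r.map h)) ⟶ A,
      k' ≫ f = pullback.fst (adj.unit.app X) (i.map (r.map h)) ∧
      pullback.lift h (adj.unit.app Y) (by simp) ≫ k' = k := by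
  obtain ⟨c, c', f₀, uA, v, hpb⟩ := hf
  set p₁ : pullback (adj.unit.app X) (i.map (r.map h)) ⟶ X :=
    pullback.fst (adj.unit.app X) (i.map (r.map h)) with hp₁
  set p₂ : pullback (adj.unit.app X) (i.map (r.map h)) ⟶ i.obj (r.obj Y) :=
    pullback.snd (adj.unit.app X) (i.map (r.map h)) with hp₂
  set u' : Y ⟶ pullback (adj.unit.app X) (i.map (r.map h)) :=
    pullback.lift h (adj.unit.app Y) (by simp) with hu'
  have hP : IsPullback p₁ p₂ (adj.unit.app X) (i.map (r.map h)) :=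
    IsPullback.of_hasPullback _ _
  have hrP := hP.map r
  -- the reflector inverts the unit
  have unitIso : ∀ Z : E, IsIso (r.map (adj.unit.app Z)) := by
    intro Z
    have h1 : r.map (adj.unit.app Z) = inv (adj.counit.app (r.obj Z)) :=
      IsIso.eq_inv_of_inv_hom_id (adj.left_triangle_components Z)
    rw [h1]; infer_instance
  haveI := unitIso X
  haveI := unitIso Y
  -- "transpose" identity
  have transpose : ∀ {Z : E} {c₀ : C} (g : Z ⟶ i.obj c₀),
      g = adj.unit.app Z ≫ i.map (r.map g ≫ adj.counit.app c₀) := by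
    intro Z c₀ g
    rw [i.map_comp, ← Category.assoc]
    have hnat := adj.unit.naturality g
    simp only [Functor.id_map, Functor.comp_map] at hnat
    rw [← hnat]
    simp
  have hu'p₁ : u' ≫ p₁ = h := by rw [hu', hp₁]; exact pullback.lift_fst _ _ _
  have hu'p₂ : u' ≫ p₂ = adj.unit.app Y := by rw [hu', hp₂]; exact pullback.lift_snd _ _ _
  -- r.map p₁ in terms of r.map p₂
  have hfst : r.map p₁ = r.map p₂ ≫ inv (r.map (adj.unit.app Y)) ≫ r.map h := by
    rw [← cancel_mono (r.map (adj.unit.app X))]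
    have hnat : h ≫ adj.unit.app X = adj.unit.app Y ≫ i.map (r.map h) := by
      have := adj.unit.naturality h
      simpa using this
    have e1 : r.map p₁ ≫ r.map (adj.unit.app X) = r.map p₂ ≫ r.map (i.map (r.map h)) := by
      rw [← r.map_comp, hP.w, r.map_comp]
    have e2 : r.map h ≫ r.map (adj.unit.app X)
        = r.map (adj.unit.app Y) ≫ r.map (i.map (r.map h)) := by
      rw [← r.map_comp, hnat, r.map_comp]
    rw [e1, Category.assoc, Category.assoc, e2, IsIso.inv_hom_id_assoc]
  -- r.map u' is an iso
  haveI hiso : IsIso (r.map u') := by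
    refine ⟨⟨r.map p₂ ≫ inv (r.map (adj.unit.app Y)), ?_, ?_⟩⟩
    · rw [← Category.assoc, ← r.map_comp, hu'p₂, IsIso.hom_inv_id]
    · apply hrP.hom_ext
      · rw [Category.assoc, ← r.map_comp, hu'p₁, Category.id_comp, hfst,
          Category.assoc]
      · rw [Category.assoc, ← r.map_comp, hu'p₂, Category.assoc,
          IsIso.inv_hom_id, Category.comp_id, Category.id_comp]
  -- the comparison map in C and the induced map to i.obj c
  set w₀ : r.obj (pullback (adj.unit.app X) (i.map (r.map h))) ⟶ c :=
    inv (r.map u') ≫ r.map k ≫ r.map uA ≫ adj.counit.app c with hw₀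
  set w : pullback (adj.unit.app X) (i.map (r.map h)) ⟶ i.obj c :=
    adj.unit.app _ ≫ i.map w₀ with hwdef
  have hruA : r.map u' ≫ w₀ = r.map k ≫ r.map uA ≫ adj.counit.app c := by
    rw [hw₀, IsIso.hom_inv_id_assoc]
  have hεnat : adj.counit.app c ≫ f₀ = r.map (i.map f₀) ≫ adj.counit.app c' := by
    have := adj.counit.naturality f₀
    simpa using this.symm
  have hkuAf : k ≫ uA ≫ i.map f₀ = h ≫ v := by
    rw [hpb.w, ← Category.assoc, hk]
  have lhs : r.map u' ≫ w₀ ≫ f₀ = r.map (h ≫ v) ≫ adj.counit.app c' := by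
    rw [← Category.assoc, hruA]
    simp only [Category.assoc]
    rw [hεnat, ← r.map_comp_assoc (f := uA), ← r.map_comp_assoc (f := k), hkuAf]
  have rhs : r.map u' ≫ r.map (p₁ ≫ v) ≫ adj.counit.app c'
      = r.map (h ≫ v) ≫ adj.counit.app c' := by
    rw [← r.map_comp_assoc, ← Category.assoc u', hu'p₁]
  have key : w₀ ≫ f₀ = r.map (p₁ ≫ v) ≫ adj.counit.app c' := by
    rw [← cancel_epi (r.map u'), lhs, rhs]
  have hw : w ≫ i.map f₀ = p₁ ≫ v := by
    rw [hwdef, Category.assoc, ← i.map_comp, key]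
    exact (transpose _).symm
  -- the lift
  refine ⟨hpb.lift w p₁ hw, ⟨hpb.lift_snd w p₁ hw, ?_⟩, ?_⟩
  · -- u' ≫ k' = k
    have hu'w : u' ≫ w = k ≫ uA := by
      rw [hwdef, ← Category.assoc]
      have hnatu : u' ≫ adj.unit.app _ = adj.unit.app Y ≫ i.map (r.map u') := by
        have := adj.unit.naturality u'
        simpa using this
      rw [hnatu, Category.assoc, ← i.map_comp, hruA,
        ← Category.assoc (r.map k), ← r.map_comp]
      exact (transpose (k ≫ uA)).symm
    apply hpb.hom_ext
    · rw [Category.assoc, hpb.lift_fst, hu'w]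
    · rw [Category.assoc, hpb.lift_snd, hu'p₁, hk]
  · -- uniqueness
    rintro k'' ⟨hf'', hu''⟩
    have hw₀eq : r.map (k'' ≫ uA) ≫ adj.counit.app c = w₀ := by
      rw [← cancel_epi (r.map u'), hruA, ← r.map_comp_assoc, ← Category.assoc u',
        hu'', r.map_comp, Category.assoc]
    apply hpb.hom_ext
    · rw [hpb.lift_fst, transpose (k'' ≫ uA), hw₀eq]
      exact hwdef.symm
    · rw [hf'', hpb.lift_snd]
end

section
/- Let G : D ⥤ C be a functor admitting a right adjoint, and suppose D has pullbacks. If φ : X ⟶ Y is a representable morphism of presheaves on C (functors Cᵒᵖ ⥤ Type), then the morphism of presheaves on D obtained by restricting along G (i.e., whiskering: X ∘ G.op ⟶ Y ∘ G.op, the image of φ under precomposition with G.op) is representable. (This is the paper's claim, used to show the co-dextrification is an adjoint modal natural model, that restriction along any functor with a right adjoint preserves representability.) -/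
open CategoryTheory CategoryTheory.Limits Opposite

universe v u₁ u₂

/-- A morphism `φ : X ⟶ Y` of presheaves on `C` is representable if for every `c : C` and
every `g : yoneda.obj c ⟶ Y`, the pullback `yoneda.obj c ×_Y X` is isomorphic to
`yoneda.obj e` for some `e : C`. -/
def IsRepresentableMor {C : Type u₁} [Category.{v} C] {X Y : Cᵒᵖ ⥤ Type v} (φ : X ⟶ Y) :
    Prop :=
  ∀ (c : C) (g : yoneda.obj c ⟶ Y), ∃ e : C, Nonempty (pullback g φ ≅ yoneda.obj e)

/-- Restriction of presheaves along a functor `G : D ⥤ C` admitting a right adjoint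
preserves representability of morphisms of presheaves, provided `D` has pullbacks. -/
theorem isRepresentableMor_whiskerLeft
    {C : Type u₁} [Category.{v} C] {D : Type u₂} [Category.{v} D] [HasPullbacks D]
    (G : D ⥤ C) (R : C ⥤ D) (adj : G ⊣ R)
    {X Y : Cᵒᵖ ⥤ Type v} (φ : X ⟶ Y) (hφ : IsRepresentableMor φ) :
    IsRepresentableMor (Functor.whiskerLeft G.op φ : G.op ⋙ X ⟶ G.op ⋙ Y) := by
  intro d g
  let F := (Functor.whiskeringLeft Dᵒᵖ Cᵒᵖ (Type v)).obj G.op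
  let g' : yoneda.obj (G.obj d) ⟶ Y := yonedaEquiv.symm (g.app (op d) (𝟙 d))
  obtain ⟨e, ⟨ι⟩⟩ := hφ (G.obj d) g'
  -- the comparison map
  let u : yoneda.obj d ⟶ G.op ⋙ yoneda.obj (G.obj d) :=
    { app := fun d' => TypeCat.ofHom (fun (f : d'.unop ⟶ d) => G.map f)
      naturality := by intros; ext; simp }
  have hg : g = u ≫ Functor.whiskerLeft G.op g' := by
    ext d' f
    have := CategoryTheory.congr_fun (g.naturality f.op) (𝟙 d)
    simp only [yoneda_obj_obj, types_comp_apply, yoneda_obj_map] at this ⊢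
    simp only [Functor.whiskerLeft_app, Functor.comp_obj]
    dsimp [u, g']
    simpa using this
  -- isos from the adjunction
  let ιc : yoneda.obj (R.obj (G.obj d)) ≅ G.op ⋙ yoneda.obj (G.obj d) :=
    adj.compYonedaIso.app (G.obj d)
  let κ : yoneda.obj (R.obj e) ≅ F.obj (pullback g' φ) :=
    (adj.compYonedaIso.app e : yoneda.obj (R.obj e) ≅ F.obj (yoneda.obj e)) ≪≫ F.mapIso ι.symm
  let m : R.obj e ⟶ R.obj (G.obj d) :=
    yoneda.preimage (κ.hom ≫ F.map (pullback.fst g' φ) ≫ ιc.inv)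
  have hm : yoneda.map m = κ.hom ≫ F.map (pullback.fst g' φ) ≫ ιc.inv :=
    yoneda.map_preimage _
  have hu : u = yoneda.map (adj.unit.app d) ≫ ιc.hom := by
    ext d' f
    simp [u, ιc, Adjunction.compYonedaIso, Adjunction.homEquiv_counit]
  -- the pullback in D
  let Q := pullback (adj.unit.app d) m
  have hQ : IsPullback (pullback.fst (adj.unit.app d) m) (pullback.snd (adj.unit.app d) m)
      (adj.unit.app d) m := IsPullback.of_hasPullback _ _
  have hQy := hQ.map yoneda
  have hA : IsPullback (yoneda.map (pullback.fst (adj.unit.app d) m))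
      (yoneda.map (pullback.snd (adj.unit.app d) m) ≫ κ.hom) u (F.map (pullback.fst g' φ)) := by
    refine hQy.of_iso (Iso.refl _) (Iso.refl _) κ ιc ?_ ?_ ?_ ?_
    · simp
    · simp
    · simp [hu]
    · rw [hm]; simp
  have hP : IsPullback (pullback.fst g' φ) (pullback.snd g' φ) g' φ := IsPullback.of_hasPullback _ _
  have hB := (hP.flip).map F
  have hbig := (hA.flip.paste_horiz hB).flip
  rw [show u ≫ F.map g' = g from hg.symm] at hbig
  exact ⟨Q, ⟨hbig.isoPullback.symm⟩⟩
end

section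
/- Let C and D be categories with finite limits that are locally cartesian closed (i.e., every slice category Over c of C and Over d of D is cartesian closed), and let F : C ⥤ D be a functor preserving finite limits. Then the comma category Comma (𝟭 D) F has finite limits and is locally cartesian closed: every slice category Over x of Comma (𝟭 D) F is cartesian closed. (This is the instance, for the mode theory freely generated by a single morphism, of the paper's lemma that the co-dextrification of a diagram of locally cartesian closed categories along finite-limit-preserving functors is locally cartesian closed.) -/
open CategoryTheory CategoryTheory.Limits

namespace ArtinGlue
noncomputable section

open MonoidalCategory CartesianMonoidalCategory CartesianClosed

universe w₁ w₂ t₁ t₂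

variable {A : Type t₁} [Category.{w₁} A] {B : Type t₂} [Category.{w₂} B]
  [CartesianMonoidalCategory A] [CartesianMonoidalCategory B]
  (G : B ⥤ A)

section Products

variable [∀ (b b' : B), PreservesLimit (pair b b') G]
  [PreservesLimit (Functor.empty.{0} B) G]

/-- Binary product object in the comma category. -/
@[simps]
def prodObj (X Y : Comma (𝟭 A) G) : Comma (𝟭 A) G where
  left := X.left ⊗ Y.left
  right := X.right ⊗ Y.right
  hom := (X.hom ⊗ₘ Y.hom) ≫ inv (prodComparison G X.right Y.right)

@[simps]
def prodFst (X Y : Comma (𝟭 A) G) : prodObj G X Y ⟶ X where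
  left := fst _ _
  right := fst _ _
  w := by simp [prodObj]

@[simps]
def prodSnd (X Y : Comma (𝟭 A) G) : prodObj G X Y ⟶ Y where
  left := snd _ _
  right := snd _ _
  w := by simp [prodObj]

@[simps]
def prodLift {T X Y : Comma (𝟭 A) G} (f : T ⟶ X) (g : T ⟶ Y) : T ⟶ prodObj G X Y where
  left := lift f.left g.left
  right := lift f.right g.right
  w := by
    dsimp [prodObj]
    rw [← Category.assoc, IsIso.comp_inv_eq]
    apply CartesianMonoidalCategory.hom_ext
    · have := f.w
      dsimp at this
      simp [this, ← G.map_comp]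
    · have := g.w
      dsimp at this
      simp [this, ← G.map_comp]

def prodCone (X Y : Comma (𝟭 A) G) : BinaryFan X Y :=
  BinaryFan.mk (prodFst G X Y) (prodSnd G X Y)

def prodConeIsLimit (X Y : Comma (𝟭 A) G) : IsLimit (prodCone G X Y) := by
  apply BinaryFan.isLimitMk (fun s => prodLift G s.fst s.snd)
  · intro s; ext <;> simp [prodCone] <;> exact lift_fst _ _
  · intro s; ext <;> simp [prodCone] <;> exact lift_snd _ _
  · intro s m h1 h2
    have l1 := congrArg CommaMorphism.left h1
    have r1 := congrArg CommaMorphism.right h1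
    have l2 := congrArg CommaMorphism.left h2
    have r2 := congrArg CommaMorphism.right h2
    dsimp [prodCone] at l1 r1 l2 r2
    ext
    · apply CartesianMonoidalCategory.hom_ext
      · exact l1.trans (lift_fst _ _).symm
      · exact l2.trans (lift_snd _ _).symm
    · apply CartesianMonoidalCategory.hom_ext
      · exact r1.trans (lift_fst _ _).symm
      · exact r2.trans (lift_snd _ _).symm

@[simps]
def terminalObj : Comma (𝟭 A) G where
  left := 𝟙_ A
  right := 𝟙_ B
  hom := inv (terminalComparison G)

@[simps]
def terminalLift (X : Comma (𝟭 A) G) : X ⟶ terminalObj G where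
  left := toUnit _
  right := toUnit _
  w := by
    show toUnit X.left ≫ inv (terminalComparison G) = X.hom ≫ G.map (toUnit X.right)
    rw [IsIso.comp_inv_eq]
    apply toUnit_unique

def terminalIsTerminal : IsTerminal (terminalObj G) :=
  IsTerminal.ofUniqueHom (terminalLift G) (fun X m => by
    ext
    · apply toUnit_unique
    · apply toUnit_unique)

/-- Chosen finite products on the comma category `Comma (𝟭 A) G`. -/
def glCFP : CartesianMonoidalCategory (Comma (𝟭 A) G) :=
  CartesianMonoidalCategory.ofChosenFiniteProducts
    ⟨asEmptyCone (terminalObj G), terminalIsTerminal G⟩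
    (fun X Y => ⟨prodCone G X Y, prodConeIsLimit G X Y⟩)

end Products


section Exponentials

variable [∀ (b b' : B), PreservesLimit (pair b b') G]
  [PreservesLimit (Functor.empty.{0} B) G]
  [MonoidalClosed A] [MonoidalClosed B] [HasPullbacks A]

attribute [local instance] glCFP

@[simp]
lemma tensorObj_left (X W : Comma (𝟭 A) G) : (X ⊗ W).left = X.left ⊗ W.left := rfl

@[simp]
lemma tensorObj_right (X W : Comma (𝟭 A) G) : (X ⊗ W).right = X.right ⊗ W.right := rfl

@[simp]
lemma tensorObj_hom (X W : Comma (𝟭 A) G) :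
    (X ⊗ W).hom = (X.hom ⊗ₘ W.hom) ≫ inv (prodComparison G X.right W.right) := rfl

@[simp]
lemma comma_fst_left (X W : Comma (𝟭 A) G) :
    (fst X W).left = fst X.left W.left := rfl

@[simp]
lemma comma_fst_right (X W : Comma (𝟭 A) G) :
    (fst X W).right = fst X.right W.right := rfl

@[simp]
lemma comma_snd_left (X W : Comma (𝟭 A) G) :
    (snd X W).left = snd X.left W.left := rfl

@[simp]
lemma comma_snd_right (X W : Comma (𝟭 A) G) :
    (snd X W).right = snd X.right W.right := rfl

lemma whiskerLeft_left' (X : Comma (𝟭 A) G) {W W' : Comma (𝟭 A) G} (n : W ⟶ W') :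
    (X ◁ n).left = X.left ◁ n.left := by
  have h1 := congrArg CommaMorphism.left (whiskerLeft_fst X n)
  have h2 := congrArg CommaMorphism.left (whiskerLeft_snd X n)
  dsimp at h1 h2
  apply CartesianMonoidalCategory.hom_ext <;> simp [h1, h2]

lemma whiskerLeft_right' (X : Comma (𝟭 A) G) {W W' : Comma (𝟭 A) G} (n : W ⟶ W') :
    (X ◁ n).right = X.right ◁ n.right := by
  have h1 := congrArg CommaMorphism.right (whiskerLeft_fst X n)
  have h2 := congrArg CommaMorphism.right (whiskerLeft_snd X n)
  dsimp at h1 h2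
  apply CartesianMonoidalCategory.hom_ext <;> simp [h1, h2]

variable (X Y : Comma (𝟭 A) G)

/-- The comparison `G (Y^X) ⟶ (G Y)^X` built by hand. -/
def vMap : G.obj (X.right ⟹ Y.right) ⟶ (X.left ⟹ G.obj Y.right) :=
  MonoidalClosed.curry ((X.hom ▷ _) ≫ inv (prodComparison G _ _) ≫
    G.map ((ihom.ev X.right).app Y.right))

def uMap : (X.left ⟹ Y.left) ⟶ (X.left ⟹ G.obj Y.right) := (ihom X.left).map Y.hom

/-- The candidate exponential object in the comma category. -/
@[simps]
def expObj : Comma (𝟭 A) G where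
  left := pullback (uMap G X Y) (vMap G X Y)
  right := X.right ⟹ Y.right
  hom := pullback.snd _ _

lemma key_u {Wl : A} (k : Wl ⟶ (X.left ⟹ Y.left)) :
    MonoidalClosed.uncurry (k ≫ uMap G X Y) = MonoidalClosed.uncurry k ≫ Y.hom :=
  MonoidalClosed.uncurry_natural_right _ _

lemma key_v {Wl : A} {Wr : B} (w : Wl ⟶ G.obj Wr) (h : X.right ⊗ Wr ⟶ Y.right) :
    MonoidalClosed.uncurry (w ≫ G.map (MonoidalClosed.curry h) ≫ vMap G X Y) =
      (X.hom ⊗ₘ w) ≫ inv (prodComparison G X.right Wr) ≫ G.map h := by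
  rw [show w ≫ G.map (MonoidalClosed.curry h) ≫ vMap G X Y
      = (w ≫ G.map (MonoidalClosed.curry h)) ≫ vMap G X Y from by simp,
    MonoidalClosed.uncurry_natural_left, vMap, MonoidalClosed.uncurry_curry]
  rw [MonoidalCategory.whiskerLeft_comp, Category.assoc,
    whisker_exchange_assoc]
  rw [← prodComparison_inv_natural_whiskerLeft_assoc]
  rw [← G.map_comp]
  have : (X.right ◁ MonoidalClosed.curry h) ≫ (ihom.ev X.right).app Y.right = h := by
    rw [← MonoidalClosed.uncurry_eq, MonoidalClosed.uncurry_curry]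
  rw [this, MonoidalCategory.tensorHom_def']
  simp only [Functor.id_obj, Category.assoc]

/-- The hom-set equivalence exhibiting `expObj` as an exponential. -/
def expEquiv (W : Comma (𝟭 A) G) :
    ((tensorLeft X).obj W ⟶ Y) ≃ (W ⟶ expObj G X Y) where
  toFun m :=
    letI k : X.left ⊗ W.left ⟶ Y.left := m.left
    letI h : X.right ⊗ W.right ⟶ Y.right := m.right
    letI mw : k ≫ Y.hom = ((X.hom ⊗ₘ W.hom) ≫ inv (prodComparison G _ _)) ≫ G.map h := m.w
    { left := pullback.lift (MonoidalClosed.curry k)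
        (W.hom ≫ G.map (MonoidalClosed.curry h)) (by
          apply MonoidalClosed.uncurry_injective
          rw [key_u, MonoidalClosed.uncurry_curry, Category.assoc, key_v]
          rw [mw, Category.assoc])
      right := MonoidalClosed.curry h
      w := by exact pullback.lift_snd _ _ _ }
  invFun n :=
    { left := MonoidalClosed.uncurry (n.left ≫ pullback.fst _ _)
      right := MonoidalClosed.uncurry n.right
      w := by
        have nw : n.left ≫ pullback.snd (uMap G X Y) (vMap G X Y)
            = W.hom ≫ G.map n.right := by exact n.w
        show MonoidalClosed.uncurry (n.left ≫ pullback.fst _ _) ≫ Y.hom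
          = ((X.hom ⊗ₘ W.hom) ≫ inv (prodComparison G _ _)) ≫
              G.map (MonoidalClosed.uncurry n.right)
        have h1 : (n.left ≫ pullback.fst _ _) ≫ uMap G X Y
            = W.hom ≫ G.map n.right ≫ vMap G X Y := by
          exact (Category.assoc _ _ _).trans ((congrArg (n.left ≫ ·) pullback.condition).trans
            ((Category.assoc _ _ _).symm.trans ((congrArg (· ≫ vMap G X Y) nw).trans (Category.assoc _ _ _))))
        have h2 := key_v G X Y W.hom (MonoidalClosed.uncurry n.right)
        erw [MonoidalClosed.curry_uncurry] at h2
        rw [← key_u, h1]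
        exact h2.trans (Category.assoc _ _ _).symm }
  left_inv m := by
    ext
    · show MonoidalClosed.uncurry (pullback.lift _ _ _ ≫ pullback.fst _ _) = m.left
      rw [pullback.lift_fst]; exact MonoidalClosed.uncurry_curry _
    · show MonoidalClosed.uncurry (MonoidalClosed.curry _) = m.right
      exact MonoidalClosed.uncurry_curry _
  right_inv n := by
    have nw : n.left ≫ pullback.snd (uMap G X Y) (vMap G X Y)
        = W.hom ≫ G.map n.right := by exact n.w
    ext
    · apply pullback.hom_ext
      · exact (pullback.lift_fst _ _ _).trans (MonoidalClosed.curry_uncurry _)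
      · rw [pullback.lift_snd]
        exact (congrArg (W.hom ≫ G.map ·) (MonoidalClosed.curry_uncurry n.right)).trans nw.symm
    · exact MonoidalClosed.curry_uncurry _

lemma expEquiv_natural {W' W : Comma (𝟭 A) G} (f : W' ⟶ W) (g : (tensorLeft X).obj W ⟶ Y) :
    expEquiv G X Y W' ((tensorLeft X).map f ≫ g) = f ≫ expEquiv G X Y W g := by
  have hl : ((tensorLeft X).map f ≫ g).left = (X.left ◁ f.left) ≫ g.left := by
    simp [whiskerLeft_left' G X f]
  have hr : ((tensorLeft X).map f ≫ g).right = (X.right ◁ f.right) ≫ g.right := by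
    simp [whiskerLeft_right' G X f]
  ext
  · show pullback.lift _ _ _ = f.left ≫ pullback.lift _ _ _
    apply pullback.hom_ext
    · rw [pullback.lift_fst, Category.assoc, pullback.lift_fst]
      rw [show MonoidalClosed.curry (((tensorLeft X).map f ≫ g).left)
          = MonoidalClosed.curry ((X.left ◁ f.left) ≫ g.left) from by rw [hl]]
      exact MonoidalClosed.curry_natural_left _ _
    · rw [pullback.lift_snd, Category.assoc, pullback.lift_snd]
      rw [show MonoidalClosed.curry (((tensorLeft X).map f ≫ g).right)
          = MonoidalClosed.curry ((X.right ◁ f.right) ≫ g.right) from by rw [hr]]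
      have fw := f.w
      dsimp at fw
      rw [show MonoidalClosed.curry (X.right ◁ f.right ≫ g.right) = f.right ≫ MonoidalClosed.curry g.right
        from MonoidalClosed.curry_natural_left _ _, G.map_comp, ← Category.assoc, ← fw]
      simp
  · show MonoidalClosed.curry _ = f.right ≫ MonoidalClosed.curry _
    rw [show MonoidalClosed.curry (((tensorLeft X).map f ≫ g).right)
        = MonoidalClosed.curry ((X.right ◁ f.right) ≫ g.right) from by rw [hr]]
    exact MonoidalClosed.curry_natural_left _ _

def glExponentiable : Closed X :=
  Closed.mk
    (Adjunction.rightAdjointOfEquiv (fun W Y => expEquiv G X Y W)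
      (fun W' W Y f g => expEquiv_natural G X Y f g))
    (Adjunction.adjunctionOfEquivRight _ _)

/-- Artin gluing: the comma category of two cartesian closed categories along a
finite-product preserving functor is cartesian closed. -/
def glCartesianClosed : MonoidalClosed (Comma (𝟭 A) G) :=
  ⟨fun X => glExponentiable G X⟩

end Exponentials

section OverPost

universe v₁ v₂ u₁ u₂

variable {C : Type u₁} [Category.{v₁} C] {D : Type u₂} [Category.{v₂} D]

/-- A binary fan in `Over B` whose legs form a pullback square is a limit fan. -/
def isLimitBinaryFanOfIsPullback {B : C} {Y Z : Over B} (c : BinaryFan Y Z)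
    (h : IsPullback c.fst.left c.snd.left Y.hom Z.hom) : IsLimit c := by
  refine IsLimit.ofIsoLimit ?_ (isoBinaryFanMk c).symm
  apply BinaryFan.isLimitMk
    (fun s => Over.homMk
      (h.lift s.fst.left s.snd.left (by
        have ws1 : s.fst.left ≫ Y.hom = s.pt.hom := Over.w s.fst
        have ws2 : s.snd.left ≫ Z.hom = s.pt.hom := Over.w s.snd
        rw [ws1, ws2]))
      (by
        have ws1 : s.fst.left ≫ Y.hom = s.pt.hom := Over.w s.fst
        have wc : c.fst.left ≫ Y.hom = c.pt.hom := Over.w c.fst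
        show _ ≫ c.pt.hom = s.pt.hom
        rw [← wc]
        exact (Category.assoc _ _ _).symm.trans ((congrArg (· ≫ Y.hom) (h.lift_fst _ _ _)).trans ws1)))
  · intro s
    ext
    exact h.lift_fst _ _ _
  · intro s
    ext
    exact h.lift_snd _ _ _
  · intro s m h1 h2
    ext
    apply h.hom_ext
    · exact (congrArg CommaMorphism.left h1).trans (h.lift_fst _ _ _).symm
    · exact (congrArg CommaMorphism.left h2).trans (h.lift_snd _ _ _).symm

variable (F : C ⥤ D) [PreservesFiniteLimits F] [HasFiniteLimits C] [HasFiniteLimits D]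

instance overPostPreservesPair {X : C} (Y Z : Over X) :
    PreservesLimit (pair Y Z) (Over.post F) := by
  apply preservesLimit_of_preserves_limit_cone (prodIsProd Y Z)
  refine (isLimitMapConeBinaryFanEquiv (Over.post F) _ _).symm ?_
  exact isLimitBinaryFanOfIsPullback
    (BinaryFan.mk ((Over.post F).map prod.fst) ((Over.post F).map prod.snd))
    ((Over.isPullback_of_binaryFan_isLimit _ (prodIsProd Y Z)).map F)

instance overPostPreservesTerminal {X : C} :
    PreservesLimit (Functor.empty.{0} (Over X)) (Over.post F) := by
  apply preservesTerminal_of_iso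
  have e1 : (⊤_ Over X) ≅ Over.mk (𝟙 X) :=
    Limits.terminalIsTerminal.uniqueUpToIso Over.mkIdTerminal
  have e2 : (Over.post F).obj (Over.mk (𝟙 X)) ≅ Over.mk (𝟙 (F.obj X)) :=
    Over.isoMk (Iso.refl _) (by exact (Category.id_comp _).trans (F.map_id X).symm)
  have e3 : Over.mk (𝟙 (F.obj X)) ≅ (⊤_ Over (F.obj X)) :=
    Over.mkIdTerminal.uniqueUpToIso Limits.terminalIsTerminal
  exact (Over.post F).mapIso e1 ≪≫ e2 ≪≫ e3

end OverPost

section Slice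

universe v₃ v₄ u₃ u₄

variable {C : Type u₃} [Category.{v₃} C] {D : Type u₄} [Category.{v₄} D]
variable (F : C ⥤ D) [HasPullbacks D]

/-- The gluing functor for the slice of a comma category. -/
def sliceG (x : Comma (𝟭 D) F) : Over x.right ⥤ Over x.left :=
  Over.post F ⋙ Over.pullback x.hom

variable (x : Comma (𝟭 D) F)

/-- From the slice of the comma category to the comma category of slices. -/
@[simps]
def sliceFunctor : Over x ⥤ Comma (𝟭 (Over x.left)) (sliceG F x) where
  obj y :=
    { left := Over.mk y.hom.left
      right := Over.mk y.hom.right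
      hom := Over.homMk (pullback.lift y.left.hom y.hom.left (by
          have := y.hom.w; dsimp at this ⊢; exact this.symm))
        (pullback.lift_snd _ _ _) }
  map {y z} f :=
    { left := Over.homMk f.left.left (by
        have h := congrArg CommaMorphism.left (Over.w f); dsimp at h ⊢; exact h)
      right := Over.homMk f.left.right (by
        have h := congrArg CommaMorphism.right (Over.w f); dsimp at h ⊢; exact h)
      w := by
        ext
        dsimp [sliceG]
        apply pullback.hom_ext
        · simp only [Category.assoc, pullback.lift_fst, pullback.lift_fst_assoc]
          have := f.left.w; dsimp at this
          exact (congrArg (_ ≫ ·) (pullback.lift_fst _ _ _)).trans (this.trans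
            ((congrArg (· ≫ _) (pullback.lift_fst _ _ _)).symm.trans
              ((Category.assoc _ _ _).trans (congrArg (_ ≫ ·) (pullback.lift_fst _ _ _).symm))))
        · simp only [Category.assoc, pullback.lift_snd, pullback.lift_snd_assoc]
          have h := congrArg CommaMorphism.left (Over.w f); dsimp at h ⊢
          exact (congrArg (_ ≫ ·) (pullback.lift_snd _ _ _)).trans
            (h.trans ((pullback.lift_snd _ _ _).symm.trans (congrArg (_ ≫ ·) (pullback.lift_snd _ _ _)).symm)) }

@[simps]
def sliceInvObj (z : Comma (𝟭 (Over x.left)) (sliceG F x)) : Comma (𝟭 D) F where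
  left := z.left.left
  right := z.right.left
  hom := z.hom.left ≫ pullback.fst (F.map z.right.hom) x.hom

@[simps]
def sliceInvHom (z : Comma (𝟭 (Over x.left)) (sliceG F x)) : sliceInvObj F x z ⟶ x where
  left := z.left.hom
  right := z.right.hom
  w := by
    dsimp
    have hz : z.hom.left ≫ pullback.snd (F.map z.right.hom) x.hom = z.left.hom := by
      have := Over.w z.hom; dsimp [sliceG] at this; exact this
    rw [← hz]
    exact (Category.assoc _ _ _).trans ((congrArg (z.hom.left ≫ ·)
      (pullback.condition (f := F.map z.right.hom) (g := x.hom)).symm).trans (Category.assoc _ _ _).symm)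

/-- From the comma category of slices to the slice of the comma category. -/
@[simps]
def sliceInverse : Comma (𝟭 (Over x.left)) (sliceG F x) ⥤ Over x where
  obj z := Over.mk (sliceInvHom F x z)
  map {z z'} m :=
    Over.homMk
      ({ left := m.left.left
         right := m.right.left
         w := by
           dsimp
           have h0 := congrArg CommaMorphism.left m.w
           dsimp [sliceG] at h0
           have h2 := congrArg
             (fun (t : _ ⟶ _) => t ≫ pullback.fst (F.map z'.right.hom) x.hom) h0
           dsimp at h2
           exact (Category.assoc _ _ _).symm.trans (h2.trans ((Category.assoc _ _ _).trans
             ((congrArg (_ ≫ ·) (pullback.lift_fst _ _ _)).trans (Category.assoc _ _ _).symm))) } : sliceInvObj F x z ⟶ sliceInvObj F x z')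
      (by
        ext
        · exact Over.w m.left
        · exact Over.w m.right)

/-- The slice of the comma category is the comma category of the slices. -/
def sliceEquiv : Over x ≌ Comma (𝟭 (Over x.left)) (sliceG F x) :=
  CategoryTheory.Equivalence.mk (sliceFunctor F x) (sliceInverse F x)
    (NatIso.ofComponents (fun y =>
      Over.isoMk (Comma.isoMk (Iso.refl _) (Iso.refl _) (by
        exact (Category.id_comp _).trans ((pullback.lift_fst _ _ _).trans
          ((Category.comp_id _).symm.trans (congrArg (_ ≫ ·) (F.map_id _).symm)))))
        (by ext <;> exact Category.id_comp _))
      (by intros; ext <;> exact (Category.comp_id _).trans (Category.id_comp _).symm))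
    (NatIso.ofComponents (fun z =>
      Comma.isoMk (Over.isoMk (Iso.refl _) (by exact Category.id_comp _))
        (Over.isoMk (Iso.refl _) (by exact Category.id_comp _))
        (by
          ext
          dsimp [sliceG]
          have hz : z.hom.left ≫ pullback.snd (F.map z.right.hom) x.hom = z.left.hom := by
            have := Over.w z.hom; dsimp [sliceG] at this; exact this
          apply pullback.hom_ext
          · exact (Category.assoc _ _ _).trans ((Category.id_comp _).trans ((Category.comp_id _).symm.trans
              ((congrArg (_ ≫ ·) (F.map_id z.right.left).symm).trans
                ((congrArg (· ≫ _) (pullback.lift_fst (f := F.map z.right.hom) (g := x.hom) _ _ _).symm).trans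
                  ((Category.assoc _ _ _).trans ((congrArg (_ ≫ ·)
                    (pullback.lift_fst (f := F.map z.right.hom) (g := x.hom) _ _ _).symm).trans
                      (Category.assoc _ _ _).symm))))))
          · exact (Category.assoc _ _ _).trans ((Category.id_comp _).trans (hz.trans
              ((pullback.lift_snd (f := F.map z.right.hom) (g := x.hom) _ _ _).symm.trans
                ((congrArg (_ ≫ ·) (pullback.lift_snd (f := F.map z.right.hom) (g := x.hom) _ _ _).symm).trans
                  (Category.assoc _ _ _).symm))))))
      (by intros; ext <;> exact (Category.comp_id _).trans (Category.id_comp _).symm))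

end Slice
end
end ArtinGlue

universe v₁ v₂ u₁ u₂

variable {C : Type u₁} [Category.{v₁} C] {D : Type u₂} [Category.{v₂} D]

/-- The comma category `Comma (𝟭 D) F` has finite limits whenever `C` and `D` do and
`F` preserves them. -/
instance commaIdHasFiniteLimits (F : C ⥤ D) [HasFiniteLimits C] [HasFiniteLimits D]
    [PreservesFiniteLimits F] : HasFiniteLimits (Comma (𝟭 D) F) :=
  ⟨fun _ _ _ => inferInstance⟩

/-- If `C` and `D` have finite limits and are locally cartesian closed (every slice is
cartesian closed) and `F : C ⥤ D` preserves finite limits, then the comma category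
`Comma (𝟭 D) F` has finite limits and is locally cartesian closed: each of its slices
is cartesian closed. -/
theorem comma_locallyCartesianClosed (F : C ⥤ D)
    [HasFiniteLimits C] [HasFiniteLimits D] [PreservesFiniteLimits F]
    (hC : ∀ c : C,
      letI := CartesianMonoidalCategory.ofHasFiniteProducts (C := Over c);
      MonoidalClosed (Over c))
    (hD : ∀ d : D,
      letI := CartesianMonoidalCategory.ofHasFiniteProducts (C := Over d);
      MonoidalClosed (Over d)) :
    HasFiniteLimits (Comma (𝟭 D) F) ∧
      ∀ x : Comma (𝟭 D) F,
        (letI := CartesianMonoidalCategory.ofHasFiniteProducts (C := Over x);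
          Nonempty (MonoidalClosed (Over x))) := by
  refine ⟨inferInstance, fun x => ?_⟩
  letI : CartesianMonoidalCategory (Over x.left) := CartesianMonoidalCategory.ofHasFiniteProducts
  letI : CartesianMonoidalCategory (Over x.right) := CartesianMonoidalCategory.ofHasFiniteProducts
  haveI : MonoidalClosed (Over x.left) := hD x.left
  haveI : MonoidalClosed (Over x.right) := hC x.right
  haveI := (Over.mapPullbackAdj x.hom).rightAdjoint_preservesLimits
  haveI h1 : ∀ (b b' : Over x.right), PreservesLimit (pair b b') (ArtinGlue.sliceG F x) :=
    fun b b' =>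
      inferInstanceAs (PreservesLimit (pair b b') (Over.post F ⋙ Over.pullback x.hom))
  haveI h2 : PreservesLimit (Functor.empty.{0} (Over x.right)) (ArtinGlue.sliceG F x) :=
    inferInstanceAs (PreservesLimit _ (Over.post F ⋙ Over.pullback x.hom))
  haveI : HasPullbacks (Over x.left) := inferInstance
  letI cfpGl : CartesianMonoidalCategory (Comma (𝟭 (Over x.left)) (ArtinGlue.sliceG F x)) :=
    ArtinGlue.glCFP _
  letI ccGl : MonoidalClosed (Comma (𝟭 (Over x.left)) (ArtinGlue.sliceG F x)) :=
    ArtinGlue.glCartesianClosed _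
  letI : CartesianMonoidalCategory (Over x) := CartesianMonoidalCategory.ofHasFiniteProducts
  exact ⟨cartesianClosedOfEquiv (ArtinGlue.sliceEquiv F x).symm⟩
end
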